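/- arXiv:1905.03803 — 2 statements merged into one kernel-verified Lean document; each statement's English description precedes it below -/
import Mathlib

section
/- Let {(Z_i, d_i)} be a countable collection of metric spaces without isolated points and let 0 < σ < 1. If f, g ∈ ⨁_i C(Z_i, σ d_i), then Θ_{⨁_i C(Z_i, d_i)}(f, g) ≤ 2 log((1+σ)/(1−σ)) + Θ_{⨁_i C(Z_i)^+}(f, g), where C(Z_i)^+ is the cone of nonnegative bounded continuous functions on Z_i. -/
section ConeDefs
variable {V : Type*} [AddCommGroup V] [Module ℝ V]

/-- The cone order: `x ≤_C y` iff `y - x ∈ C ∪ {0}`. -/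
def coneLE (C : Set V) (x y : V) : Prop := y - x ∈ C ∪ {0}

/-- `m(x/y; C) = sup{α : α y ≤_C x}`. -/
noncomputable def coneM (C : Set V) (x y : V) : ℝ :=
  sSup {α : ℝ | coneLE C (α • y) x}

/-- `M(x/y; C) = inf{β : x ≤_C β y}`. -/
noncomputable def coneMM (C : Set V) (x y : V) : ℝ :=
  sInf {β : ℝ | coneLE C x (β • y)}

/-- Hilbert's projective metric `Θ_C(x,y) = log(M(x/y)/m(x/y))`. -/
noncomputable def hilbertTheta (C : Set V) (x y : V) : ℝ :=
  Real.log (coneMM C x y / coneM C x y)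

end ConeDefs

/-- The cone `C(Z, c·d)` of positive bounded continuous functions with
`f(x) ≤ e^{c·d(x,y)} f(y)`. -/
def scaledLogLipCone (Z : Type*) [MetricSpace Z] (c : ℝ) :
    Set (BoundedContinuousFunction Z ℝ) :=
  {f | (∀ x, 0 < f x) ∧ ∀ x y, f x ≤ Real.exp (c * dist x y) * f y}

/-- The cone `C(Z)^+` of nonnegative bounded continuous functions (minus `0`). -/
def posCone (Z : Type*) [MetricSpace Z] : Set (BoundedContinuousFunction Z ℝ) :=
  {f | ∀ x, 0 ≤ f x} \ {0}

/-- The direct sum cone inside the `ℓ^∞`-direct sum. -/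
def directSumCone {ι : Type*} {X : ι → Type*} [∀ i, NormedAddCommGroup (X i)]
    [∀ i, NormedSpace ℝ (X i)] (C : ∀ i, Set (X i)) : Set (lp X ⊤) :=
  {x : lp X ⊤ | ∀ i, (x : ∀ i, X i) i ∈ C i ∪ {0}} \ {0}

/-!
Put `K = (1 + σ) / (1 - σ)`. If `u, v ∈ C(Z, σ d)` and `u ≥ K v` pointwise, then
`u - v ∈ C(Z, d)`: with `t = d(x, y)` one has `u x ≤ e^{σ t} u y` and `v x ≥ e^{-σ t} v y`, and
convexity of `exp` gives `(1 - σ) (e^t - e^{-σ t}) ≤ (1 + σ) (e^t - e^{σ t})`, which together with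
`(1 + σ) v y ≤ (1 - σ) u y` yields `(u - v) x ≤ e^t (u - v) y`. Hence componentwise bounds
`α g ≤ f ≤ β g` by nonnegative functions become bounds `(α / K) g ≤ f ≤ (K β) g` in the cone
`⨁ C(Z_i, d_i)`, so passing to the smaller cone decreases `m(f/g)` and increases `M(f/g)` by at
most a factor `K` each.
-/

theorem log_div_le_two_log_add_log_div {K m₀ m₁ M₀ M₁ : ℝ} (hK : 1 ≤ K) (hm₁ : 0 ≤ m₁)
    (hm₁₀ : m₁ ≤ m₀) (hm₀₁ : m₀ ≤ K * m₁) (hmM : m₀ ≤ M₀) (hM₀₁ : M₀ ≤ M₁)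
    (hM₁₀ : M₁ ≤ K * M₀) :
    Real.log (M₁ / m₁) ≤ 2 * Real.log K + Real.log (M₀ / m₀) := by
  have hlogK : 0 ≤ Real.log K := Real.log_nonneg hK
  rcases hm₁.eq_or_lt with rfl | hm₁_pos
  · have hm₀ : m₀ = 0 := by linarith
    simp only [hm₀, div_zero, Real.log_zero]
    linarith
  have hm₀_pos : 0 < m₀ := hm₁_pos.trans_le hm₁₀
  have hM₀_pos : 0 < M₀ := hm₀_pos.trans_le hmM
  have hK_pos : 0 < K := one_pos.trans_le hK
  have hratio : M₁ / m₁ ≤ K ^ 2 * (M₀ / m₀) :=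
    calc M₁ / m₁ ≤ K * M₀ / (m₀ / K) :=
          div_le_div₀ (by positivity) hM₁₀ (by positivity)
            ((div_le_iff₀ hK_pos).2 (by linarith))
      _ = K ^ 2 * (M₀ / m₀) := by field_simp
  calc Real.log (M₁ / m₁) ≤ Real.log (K ^ 2 * (M₀ / m₀)) :=
        Real.log_le_log (div_pos (hM₀_pos.trans_le hM₀₁) hm₁_pos) hratio
    _ = 2 * Real.log K + Real.log (M₀ / m₀) := by
        rw [Real.log_mul (by positivity) (by positivity), Real.log_pow, Nat.cast_ofNat]

/-- `A` and `B` play the roles of the sets of lower and upper bounds `α`, `β` with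
`α g ≤ f ≤ β g` for two cones, the one indexed `1` being the smaller one. -/
theorem log_sInf_div_sSup_le {K : ℝ} {A₀ A₁ B₀ B₁ : Set ℝ} (hK : 1 ≤ K)
    (hA : A₁ ⊆ A₀) (hB : B₁ ⊆ B₀) (h0 : 0 ∈ A₁) (hA₀ : BddAbove A₀)
    (hAB : ∀ α ∈ A₀, ∀ β ∈ B₀, α ≤ β) (hA₀₁ : ∀ α ∈ A₀, 0 < α → α / K ∈ A₁)
    (hB₀₁ : ∀ β ∈ B₀, K * β ∈ B₁) :
    Real.log (sInf B₁ / sSup A₁) ≤ 2 * Real.log K + Real.log (sInf B₀ / sSup A₀) := by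
  have hK_pos : 0 < K := one_pos.trans_le hK
  rcases B₀.eq_empty_or_nonempty with hB₀ | ⟨β₀, hβ₀⟩
  · rw [hB₀, Set.subset_empty_iff.1 (hB.trans hB₀.subset)]
    simp only [Real.sInf_empty, zero_div, Real.log_zero, add_zero]
    linarith [Real.log_nonneg hK]
  have hB₀_bdd : BddBelow B₀ := ⟨0, fun β hβ => hAB 0 (hA h0) β hβ⟩
  have hB₁_ne : B₁.Nonempty := ⟨K * β₀, hB₀₁ β₀ hβ₀⟩
  refine log_div_le_two_log_add_log_div hK (le_csSup (hA₀.mono hA) h0)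
    (csSup_le_csSup hA₀ ⟨0, h0⟩ hA) ?_ ?_ (csInf_le_csInf hB₀_bdd hB₁_ne hB) ?_
  · refine csSup_le ⟨0, hA h0⟩ fun α hα => ?_
    have hm₁ : 0 ≤ sSup A₁ := le_csSup (hA₀.mono hA) h0
    rcases le_or_gt α 0 with hα_nonpos | hα_pos
    · exact hα_nonpos.trans (mul_nonneg hK_pos.le hm₁)
    · have := le_csSup (hA₀.mono hA) (hA₀₁ α hα hα_pos)
      rwa [div_le_iff₀' hK_pos] at this
  · exact csSup_le ⟨0, hA h0⟩ fun α hα => le_csInf ⟨β₀, hβ₀⟩ fun β hβ => hAB α hα β hβ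
  · have : sInf B₁ / K ≤ sInf B₀ := le_csInf ⟨β₀, hβ₀⟩ fun β hβ =>
      (div_le_iff₀' hK_pos).2 (csInf_le (hB₀_bdd.mono hB) (hB₀₁ β hβ))
    rwa [div_le_iff₀' hK_pos] at this

theorem coneLE_mono {V : Type*} [AddCommGroup V] {C D : Set V} (h : C ⊆ D) {x y : V}
    (hxy : coneLE C x y) : coneLE D x y :=
  Set.union_subset_union_left _ h hxy

section HilbertTheta
variable {V : Type*} [AddCommGroup V] [Module ℝ V]

theorem hilbertTheta_le_two_log_add {C D : Set V} {f g : V} {K : ℝ} (hK : 1 ≤ K)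
    (hCD : C ⊆ D) (hf : coneLE C 0 f)
    (hbdd : BddAbove {α : ℝ | coneLE D (α • g) f})
    (hsep : ∀ α β : ℝ, coneLE D (α • g) f → coneLE D f (β • g) → α ≤ β)
    (hlower : ∀ α : ℝ, coneLE D (α • g) f → 0 < α → coneLE C ((α / K) • g) f)
    (hupper : ∀ β : ℝ, coneLE D f (β • g) → coneLE C f ((K * β) • g)) :
    hilbertTheta C f g ≤ 2 * Real.log K + hilbertTheta D f g :=
  log_sInf_div_sSup_le hK (fun _ => coneLE_mono hCD) (fun _ => coneLE_mono hCD)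
    (show coneLE C ((0 : ℝ) • g) f by rwa [zero_smul]) hbdd
    (fun α hα β hβ => hsep α β hα hβ) hlower hupper

end HilbertTheta

/-- Convexity of `exp`: its value at `σ t` lies below the chord through `t` and `-σ t`. -/
theorem one_sub_mul_exp_sub_exp_neg_le {σ : ℝ} (hσ0 : 0 ≤ σ) (hσ1 : σ ≤ 1) (t : ℝ) :
    (1 - σ) * (Real.exp t - Real.exp (-(σ * t))) ≤
      (1 + σ) * (Real.exp t - Real.exp (σ * t)) := by
  have h1σ : 0 < 1 + σ := by linarith
  have hconv := convexOn_exp.2 (Set.mem_univ t) (Set.mem_univ (-(σ * t)))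
    (div_nonneg (by linarith : (0 : ℝ) ≤ 2 * σ) h1σ.le) (div_nonneg (sub_nonneg.2 hσ1) h1σ.le)
    (by field_simp; ring)
  have harg : 2 * σ / (1 + σ) * t + (1 - σ) / (1 + σ) * -(σ * t) = σ * t := by
    field_simp; ring
  simp only [smul_eq_mul, harg] at hconv
  have := mul_le_mul_of_nonneg_left hconv h1σ.le
  field_simp at this
  linarith

section ScaledLogLipCone
variable {Z : Type*} [MetricSpace Z]

theorem nonneg_of_mem_scaledLogLipCone_union_zero {c : ℝ} {h : BoundedContinuousFunction Z ℝ}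
    (hh : h ∈ scaledLogLipCone Z c ∪ {0}) (x : Z) : 0 ≤ h x := by
  rcases hh with hh | rfl
  · exact (hh.1 x).le
  · exact le_rfl

theorem smul_mem_scaledLogLipCone {c t : ℝ} {p : BoundedContinuousFunction Z ℝ}
    (hp : p ∈ scaledLogLipCone Z c) (ht : 0 < t) : t • p ∈ scaledLogLipCone Z c := by
  refine ⟨fun x => mul_pos ht (hp.1 x), fun x y => ?_⟩
  simp only [BoundedContinuousFunction.coe_smul, smul_eq_mul]
  rw [mul_left_comm]
  exact mul_le_mul_of_nonneg_left (hp.2 x y) ht.le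

theorem scaledLogLipCone_mono {c c' : ℝ} (hc : c ≤ c') :
    scaledLogLipCone Z c ⊆ scaledLogLipCone Z c' := fun _ hp =>
  ⟨hp.1, fun x y => (hp.2 x y).trans <| mul_le_mul_of_nonneg_right
    (Real.exp_le_exp.2 (mul_le_mul_of_nonneg_right hc dist_nonneg)) (hp.1 y).le⟩

theorem sub_mem_scaledLogLipCone_one {σ : ℝ} (hσ0 : 0 < σ) (hσ1 : σ < 1)
    {u v : BoundedContinuousFunction Z ℝ}
    (hu : u ∈ scaledLogLipCone Z σ) (hv : v ∈ scaledLogLipCone Z σ)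
    (huv : ∀ x, (1 + σ) / (1 - σ) * v x ≤ u x) :
    u - v ∈ scaledLogLipCone Z 1 := by
  have h1σ : 0 < 1 - σ := by linarith
  have huv' : ∀ x, (1 + σ) * v x ≤ (1 - σ) * u x := fun x => by
    have := huv x
    rw [div_mul_eq_mul_div, div_le_iff₀ h1σ] at this
    linarith
  refine ⟨fun x => ?_, fun x y => ?_⟩
  · simp only [BoundedContinuousFunction.coe_sub, Pi.sub_apply, sub_pos]
    nlinarith [huv' x, mul_pos hσ0 (hv.1 x)]
  simp only [BoundedContinuousFunction.coe_sub, Pi.sub_apply, one_mul]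
  set t := dist x y
  have hux : u x ≤ Real.exp (σ * t) * u y := hu.2 x y
  have hvx : Real.exp (-(σ * t)) * v y ≤ v x := by
    have := mul_le_mul_of_nonneg_left (hv.2 y x) (Real.exp_pos (-(σ * t))).le
    rwa [dist_comm, ← mul_assoc, ← Real.exp_add, neg_add_cancel, Real.exp_zero, one_mul] at this
  have hexp : Real.exp (σ * t) ≤ Real.exp t :=
    Real.exp_le_exp.2 (mul_le_of_le_one_left dist_nonneg hσ1.le)
  -- multiply the chord estimate by `v y` and use `(1 + σ) v y ≤ (1 - σ) u y`
  have key :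
      (Real.exp t - Real.exp (-(σ * t))) * v y ≤ (Real.exp t - Real.exp (σ * t)) * u y := by
    nlinarith [mul_le_mul_of_nonneg_right (one_sub_mul_exp_sub_exp_neg_le hσ0.le hσ1.le t)
      (hv.1 y).le, mul_le_mul_of_nonneg_left (huv' y) (sub_nonneg.2 hexp)]
  nlinarith

theorem sub_mem_scaledLogLipCone_one_union_zero {σ : ℝ} (hσ0 : 0 < σ) (hσ1 : σ < 1)
    {u v : BoundedContinuousFunction Z ℝ}
    (hu : u ∈ scaledLogLipCone Z σ ∪ {0}) (hv : v ∈ scaledLogLipCone Z σ ∪ {0})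
    (huv : ∀ x, (1 + σ) / (1 - σ) * v x ≤ u x) :
    u - v ∈ scaledLogLipCone Z 1 ∪ {0} := by
  rcases isEmpty_or_nonempty Z with hZ | ⟨⟨z⟩⟩
  · exact Or.inr (BoundedContinuousFunction.ext fun x => isEmptyElim x)
  rcases hv with hv | rfl
  · rcases hu with hu | rfl
    · exact Or.inl (sub_mem_scaledLogLipCone_one hσ0 hσ1 hu hv huv)
    · have hK : 0 < (1 + σ) / (1 - σ) := div_pos (by linarith) (by linarith)
      exact absurd (huv z) (by simpa using mul_pos hK (hv.1 z))
  · rw [sub_zero]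
    exact hu.imp_left fun h => scaledLogLipCone_mono hσ1.le h

end ScaledLogLipCone

section DirectSum
variable {ι : Type*}

theorem coneLE_directSumCone_iff {X : ι → Type*} [∀ i, NormedAddCommGroup (X i)]
    [∀ i, NormedSpace ℝ (X i)] {C : ∀ i, Set (X i)} {a b : lp X ⊤} :
    coneLE (directSumCone C) a b ↔ ∀ i, b i - a i ∈ C i ∪ {0} := by
  have h0 : (0 : lp X ⊤) ∈ {x : lp X ⊤ | ∀ i, x i ∈ C i ∪ {0}} := fun _ => Or.inr rfl
  rw [coneLE, directSumCone, Set.sdiff_union_of_subset (Set.singleton_subset_iff.2 h0)]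
  simp only [Set.mem_ofPred_eq, lp.coeFn_sub, Pi.sub_apply]

theorem directSumCone_mono {X : ι → Type*} [∀ i, NormedAddCommGroup (X i)]
    [∀ i, NormedSpace ℝ (X i)] {C D : ∀ i, Set (X i)} (h : ∀ i, C i ∪ {0} ⊆ D i ∪ {0}) :
    directSumCone C ⊆ directSumCone D :=
  fun _ hx => ⟨fun i => h i (hx.1 i), hx.2⟩

end DirectSum

theorem mem_posCone_union_zero_iff {Z : Type*} [MetricSpace Z]
    {h : BoundedContinuousFunction Z ℝ} :
    h ∈ posCone Z ∪ {0} ↔ ∀ x, 0 ≤ h x := by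
  have h0 : (0 : BoundedContinuousFunction Z ℝ) ∈ {f | ∀ x, 0 ≤ f x} := fun _ => le_rfl
  rw [posCone, Set.sdiff_union_of_subset (Set.singleton_subset_iff.2 h0)]
  rfl

theorem scaledLogLipCone_union_zero_subset_posCone_union_zero {Z : Type*} [MetricSpace Z] (c : ℝ) :
    scaledLogLipCone Z c ∪ {0} ⊆ posCone Z ∪ {0} :=
  fun _ hh => mem_posCone_union_zero_iff.2 (nonneg_of_mem_scaledLogLipCone_union_zero hh)

section DirectSumOfFunctions
variable {ι : Type*} {Z : ι → Type*} [∀ i, MetricSpace (Z i)]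

theorem coneLE_directSumCone_posCone_iff
    {a b : lp (fun i => BoundedContinuousFunction (Z i) ℝ) ⊤} :
    coneLE (directSumCone fun i => posCone (Z i)) a b ↔ ∀ i x, a i x ≤ b i x := by
  simp only [coneLE_directSumCone_iff, mem_posCone_union_zero_iff,
    BoundedContinuousFunction.coe_sub, Pi.sub_apply, sub_nonneg]

theorem smul_apply_apply (t : ℝ) (f : lp (fun i => BoundedContinuousFunction (Z i) ℝ) ⊤)
    (i : ι) (x : Z i) : (t • f) i x = t * f i x := by
  rw [lp.coeFn_smul, Pi.smul_apply, BoundedContinuousFunction.smul_apply, smul_eq_mul]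

theorem coneLE_directSumCone_posCone_smul_left_iff {t : ℝ}
    {a b : lp (fun i => BoundedContinuousFunction (Z i) ℝ) ⊤} :
    coneLE (directSumCone fun i => posCone (Z i)) (t • a) b ↔ ∀ i x, t * a i x ≤ b i x := by
  simp only [coneLE_directSumCone_posCone_iff, smul_apply_apply]

theorem coneLE_directSumCone_posCone_smul_right_iff {t : ℝ}
    {a b : lp (fun i => BoundedContinuousFunction (Z i) ℝ) ⊤} :
    coneLE (directSumCone fun i => posCone (Z i)) a (t • b) ↔ ∀ i x, a i x ≤ t * b i x := by
  simp only [coneLE_directSumCone_posCone_iff, smul_apply_apply]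

theorem exists_pos_of_mem_directSumCone {c : ℝ}
    {f : lp (fun i => BoundedContinuousFunction (Z i) ℝ) ⊤}
    (hf : f ∈ directSumCone fun i => scaledLogLipCone (Z i) c) : ∃ i z, 0 < f i z := by
  obtain ⟨i, hi⟩ : ∃ i, f i ≠ 0 := by
    by_contra! h
    exact hf.2 (lp.ext (funext h))
  have hfi : f i ∈ scaledLogLipCone (Z i) c := (hf.1 i).resolve_right hi
  obtain ⟨z⟩ : Nonempty (Z i) := by
    by_contra! hZ
    exact hi (BoundedContinuousFunction.ext fun x => isEmptyElim x)
  exact ⟨i, z, hfi.1 z⟩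

theorem smul_apply_mem_scaledLogLipCone_union_zero {c t : ℝ} (ht : 0 < t)
    {f : lp (fun i => BoundedContinuousFunction (Z i) ℝ) ⊤}
    (hf : ∀ i, f i ∈ scaledLogLipCone (Z i) c ∪ {0}) (i : ι) :
    (t • f) i ∈ scaledLogLipCone (Z i) c ∪ {0} := by
  rw [lp.coeFn_smul, Pi.smul_apply]
  rcases hf i with hfi | hfi
  · exact Or.inl (smul_mem_scaledLogLipCone hfi ht)
  · rw [Set.mem_singleton_iff.1 hfi, smul_zero]
    exact Or.inr rfl

theorem coneLE_directSumCone_scaledLogLipCone_one {σ : ℝ} (hσ0 : 0 < σ) (hσ1 : σ < 1)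
    {a b : lp (fun i => BoundedContinuousFunction (Z i) ℝ) ⊤}
    (ha : ∀ i, a i ∈ scaledLogLipCone (Z i) σ ∪ {0})
    (hb : ∀ i, b i ∈ scaledLogLipCone (Z i) σ ∪ {0})
    (hab : ∀ i x, (1 + σ) / (1 - σ) * a i x ≤ b i x) :
    coneLE (directSumCone fun i => scaledLogLipCone (Z i) 1) a b :=
  coneLE_directSumCone_iff.2 fun i =>
    sub_mem_scaledLogLipCone_one_union_zero hσ0 hσ1 (hb i) (ha i) (hab i)

end DirectSumOfFunctions

section DirectSumComparison
variable {ι : Type*} {Z : ι → Type*} [∀ i, MetricSpace (Z i)] {σ : ℝ}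
  {f g : lp (fun i => BoundedContinuousFunction (Z i) ℝ) ⊤}

theorem coneLE_div_smul_of_coneLE_posCone (hσ0 : 0 < σ) (hσ1 : σ < 1)
    (hf : f ∈ directSumCone fun i => scaledLogLipCone (Z i) σ)
    (hg : g ∈ directSumCone fun i => scaledLogLipCone (Z i) σ) {α : ℝ} (hα : 0 < α)
    (hle : coneLE (directSumCone fun i => posCone (Z i)) (α • g) f) :
    coneLE (directSumCone fun i => scaledLogLipCone (Z i) 1)
      ((α / ((1 + σ) / (1 - σ))) • g) f := by
  have hK : 0 < (1 + σ) / (1 - σ) := div_pos (by linarith) (by linarith)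
  refine coneLE_directSumCone_scaledLogLipCone_one hσ0 hσ1
    (smul_apply_mem_scaledLogLipCone_union_zero (div_pos hα hK) hg.1) hf.1 fun i x => ?_
  rw [smul_apply_apply, ← mul_assoc, mul_div_cancel₀ _ hK.ne']
  exact coneLE_directSumCone_posCone_smul_left_iff.1 hle i x

theorem coneLE_mul_smul_of_coneLE_posCone (hσ0 : 0 < σ) (hσ1 : σ < 1)
    (hf : f ∈ directSumCone fun i => scaledLogLipCone (Z i) σ)
    (hg : g ∈ directSumCone fun i => scaledLogLipCone (Z i) σ) {β : ℝ}
    (hle : coneLE (directSumCone fun i => posCone (Z i)) f (β • g)) :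
    coneLE (directSumCone fun i => scaledLogLipCone (Z i) 1) f
      (((1 + σ) / (1 - σ) * β) • g) := by
  have hK : 0 < (1 + σ) / (1 - σ) := div_pos (by linarith) (by linarith)
  have hle' := coneLE_directSumCone_posCone_smul_right_iff.1 hle
  obtain ⟨i₀, z₀, hf₀⟩ := exists_pos_of_mem_directSumCone hf
  have hβ : 0 < β := pos_of_mul_pos_left (hf₀.trans_le (hle' i₀ z₀))
    (nonneg_of_mem_scaledLogLipCone_union_zero (hg.1 i₀) z₀)
  refine coneLE_directSumCone_scaledLogLipCone_one hσ0 hσ1 hf.1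
    (smul_apply_mem_scaledLogLipCone_union_zero (mul_pos hK hβ) hg.1) fun i x => ?_
  rw [smul_apply_apply, mul_assoc]
  exact mul_le_mul_of_nonneg_left (hle' i x) hK.le

end DirectSumComparison

theorem theta_bound_regularity_cones_general {ι : Type*}
    (Z : ι → Type*) [∀ i, MetricSpace (Z i)]
    (σ : ℝ) (hσ0 : 0 < σ) (hσ1 : σ < 1)
    (f g : lp (fun i => BoundedContinuousFunction (Z i) ℝ) ⊤)
    (hf : f ∈ directSumCone (fun i => scaledLogLipCone (Z i) σ))
    (hg : g ∈ directSumCone (fun i => scaledLogLipCone (Z i) σ)) :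
    hilbertTheta (directSumCone (fun i => scaledLogLipCone (Z i) 1)) f g ≤
      2 * Real.log ((1 + σ) / (1 - σ)) +
        hilbertTheta (directSumCone (fun i => posCone (Z i))) f g := by
  have hK : 1 ≤ (1 + σ) / (1 - σ) := (one_le_div (by linarith)).2 (by linarith)
  have hf₁ : coneLE (directSumCone fun i => scaledLogLipCone (Z i) 1) 0 f := by
    rw [coneLE, sub_zero]
    exact Or.inl (directSumCone_mono
      (fun i => Set.union_subset_union_left _ (scaledLogLipCone_mono hσ1.le)) hf)
  obtain ⟨i, z, hgz⟩ := exists_pos_of_mem_directSumCone hg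
  refine hilbertTheta_le_two_log_add hK
    (directSumCone_mono fun _ => scaledLogLipCone_union_zero_subset_posCone_union_zero 1)
    hf₁ ⟨f i z / g i z, fun α hα => ?_⟩ (fun α β hα hβ => ?_)
    (fun α hle hα => coneLE_div_smul_of_coneLE_posCone hσ0 hσ1 hf hg hα hle)
    (fun β hle => coneLE_mul_smul_of_coneLE_posCone hσ0 hσ1 hf hg hle)
  · exact (le_div_iff₀ hgz).2 (coneLE_directSumCone_posCone_smul_left_iff.1 hα i z)
  · exact le_of_mul_le_mul_right ((coneLE_directSumCone_posCone_smul_left_iff.1 hα i z).trans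
      (coneLE_directSumCone_posCone_smul_right_iff.1 hβ i z)) hgz

/-- Regularity-cone bound for the Hilbert metric: for a countable family of metric
spaces without isolated points and `0 < σ < 1`, if `f, g ∈ ⨁_i C(Z_i, σ d_i)` then
`Θ_{⨁_i C(Z_i, d_i)}(f,g) ≤ 2 log((1+σ)/(1-σ)) + Θ_{⨁_i C(Z_i)^+}(f,g)`. -/
theorem theta_bound_regularity_cones {ι : Type*} [Countable ι]
    (Z : ι → Type*) [∀ i, MetricSpace (Z i)]
    (hni : ∀ i, ∀ z : Z i, Filter.NeBot (nhdsWithin z {z}ᶜ))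
    (σ : ℝ) (hσ0 : 0 < σ) (hσ1 : σ < 1)
    (f g : lp (fun i => BoundedContinuousFunction (Z i) ℝ) ⊤)
    (hf : f ∈ directSumCone (fun i => scaledLogLipCone (Z i) σ))
    (hg : g ∈ directSumCone (fun i => scaledLogLipCone (Z i) σ)) :
    hilbertTheta (directSumCone (fun i => scaledLogLipCone (Z i) 1)) f g ≤
      2 * Real.log ((1 + σ) / (1 - σ)) +
        hilbertTheta (directSumCone (fun i => posCone (Z i))) f g :=
  theta_bound_regularity_cones_general Z σ hσ0 hσ1 f g hf hg
end

section
/- (Dual pairing bound for the Hilbert metric) Let C be a closed cone in a Banach space X and let x, y ∈ C be comparable. Then for any φ ∈ C*, ⟨x, φ⟩ = 0 iff ⟨y, φ⟩ = 0, and Θ_C(x,y) = log( sup{ (⟨x,φ⟩⟨y,ψ⟩)/(⟨y,φ⟩⟨x,ψ⟩) : φ, ψ ∈ C*, ⟨y,φ⟩⟨x,ψ⟩ ≠ 0 } ). In particular, |log(⟨x,φ⟩/⟨y,φ⟩) − log(⟨x,ψ⟩/⟨y,ψ⟩)| ≤ Θ_C(x,y) for all φ, ψ ∈ C* with nonzero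 pairings. -/
section ConeDefs
variable {V : Type*} [AddCommGroup V] [Module ℝ V]

/-- `C` is a cone: closed under positive scaling, convex, and `C ∩ (-C) = ∅`. -/
def IsCone (C : Set V) : Prop :=
  (∀ x ∈ C, ∀ a : ℝ, 0 < a → a • x ∈ C) ∧ Convex ℝ C ∧ ∀ x ∈ C, -x ∉ C

/-- `x` dominates `y`. -/
def dominates (C : Set V) (x y : V) : Prop :=
  ∃ α β : ℝ, coneLE C (α • x) y ∧ coneLE C y (β • x)

/-- `x` and `y` are comparable. -/
def coneComparable (C : Set V) (x y : V) : Prop :=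
  dominates C x y ∧ dominates C y x

end ConeDefs

/-- The dual wedge `C* = {ψ : ⟨x,ψ⟩ ≥ 0 for all x ∈ C}` of a cone in a Banach space. -/
def dualWedge {X : Type*} [NormedAddCommGroup X] [NormedSpace ℝ X] (C : Set X) :
    Set (StrongDual ℝ X) :=
  {ψ | ∀ x ∈ C, 0 ≤ ψ x}

/-!
By Hahn–Banach separation (Farkas' lemma for the closed pointed cone `C ∪ {0}`) the cone order
is detected by `C*`: `x ≤_C β y` iff `φ x ≤ β φ y` for all `φ ∈ C*`. Hence `M(x/y)` and `m(x/y)`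
are the supremum and infimum of the ratios `φ x / φ y` over the `φ ∈ C*` positive at `y`, so
`M/m` is the supremum of the quotients of two such ratios, and any two of the ratios lie in
`[m, M]`.
-/
section

open Set Pointwise

theorem Real.csSup_div_self {s : Set ℝ} {a : ℝ} (hne : s.Nonempty) (hbdd : BddAbove s)
    (ha : 0 < a) (has : a ∈ lowerBounds s) : sSup (s / s) = sSup s / sInf s := by
  have hinf : 0 < sInf s := ha.trans_le (le_csInf hne has)
  have hpos : ∀ p ∈ s, 0 < p := fun p hp => hinf.trans_le (csInf_le ⟨a, has⟩ hp)
  refine IsLUB.csSup_eq ⟨?_, fun u hu => ?_⟩ (hne.div hne)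
  · rintro _ ⟨p, hp, q, hq, rfl⟩
    exact div_le_div₀ ((hpos p hp).le.trans (le_csSup hbdd hp)) (le_csSup hbdd hp) hinf
      (csInf_le ⟨a, has⟩ hq)
  · obtain ⟨p₀, hp₀⟩ := hne
    have hu_pos : 0 < u := one_pos.trans_le <| by
      simpa [div_self (hpos p₀ hp₀).ne'] using hu (div_mem_div hp₀ hp₀)
    rw [div_le_iff₀ hinf]
    refine csSup_le ⟨p₀, hp₀⟩ fun p hp => ?_
    rw [← div_le_iff₀' hu_pos]
    refine le_csInf ⟨p₀, hp₀⟩ fun q hq => ?_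
    rw [div_le_iff₀' hu_pos, ← div_le_iff₀ (hpos q hq)]
    exact hu (div_mem_div hp hq)

theorem Real.abs_log_sub_log_le_log_div {a b m M : ℝ} (ha : a ∈ Icc m M) (hb : b ∈ Icc m M)
    (hm : 0 < m) : |Real.log a - Real.log b| ≤ Real.log (M / m) := by
  have hlog : ∀ c ∈ Icc m M, Real.log m ≤ Real.log c ∧ Real.log c ≤ Real.log M :=
    fun c hc => ⟨Real.log_le_log hm hc.1, Real.log_le_log (hm.trans_le hc.1) hc.2⟩
  rw [Real.log_div (hm.trans_le (ha.1.trans ha.2)).ne' hm.ne']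
  exact abs_sub_le_of_le_of_le (hlog a ha).1 (hlog a ha).2 (hlog b hb).1 (hlog b hb).2

namespace IsCone

variable {V : Type*} [AddCommGroup V] [Module ℝ V] {C : Set V}

theorem add_mem (hC : IsCone C) {x y : V} (hx : x ∈ C) (hy : y ∈ C) : x + y ∈ C := by
  have hmid : (2⁻¹ : ℝ) • x + (2⁻¹ : ℝ) • y ∈ C :=
    hC.2.1 hx hy (by norm_num) (by norm_num) (by norm_num)
  simpa [smul_add, smul_smul] using hC.1 _ hmid 2 two_pos

theorem zero_notMem (hC : IsCone C) : (0 : V) ∉ C := fun h => hC.2.2 0 h (by simpa using h)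

theorem smul_mem_union_zero (hC : IsCone C) {x : V} (hx : x ∈ C ∪ {0}) {a : ℝ} (ha : 0 ≤ a) :
    a • x ∈ C ∪ {0} := by
  rcases ha.eq_or_lt with rfl | ha
  · simp
  rcases hx with hx | rfl
  · exact .inl (hC.1 x hx a ha)
  · simp

variable {X : Type*} [NormedAddCommGroup X] [NormedSpace ℝ X] {C : Set X}

def properCone (hC : IsCone C) (hCc : IsClosed (C ∪ {0})) : ProperCone ℝ X where
  carrier := C ∪ {0}
  add_mem' := by
    rintro x y (hx | rfl) (hy | rfl)
    · exact .inl (hC.add_mem hx hy)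
    all_goals simp_all
  zero_mem' := .inr rfl
  smul_mem' c _ hx := hC.smul_mem_union_zero hx c.2
  isClosed' := hCc

end IsCone

variable {X : Type*} [NormedAddCommGroup X] [NormedSpace ℝ X] {C : Set X}

theorem apply_le_apply_of_coneLE {φ : StrongDual ℝ X} (hφ : φ ∈ dualWedge C) {a b : X}
    (hab : coneLE C a b) : φ a ≤ φ b := by
  rw [← sub_nonneg, ← map_sub]
  rcases hab with h | h
  · exact hφ _ h
  · simp [mem_singleton_iff.1 h]

theorem coneLE_iff_forall_dualWedge (hC : IsCone C) (hCc : IsClosed (C ∪ {0})) {a b : X} :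
    coneLE C a b ↔ ∀ φ ∈ dualWedge C, φ a ≤ φ b := by
  refine ⟨fun hab φ hφ => apply_le_apply_of_coneLE hφ hab, fun h => ?_⟩
  by_contra hab
  obtain ⟨f, hf, hfab⟩ := (hC.properCone hCc).hyperplane_separation_point hab
  have := h f fun c hc => hf c (.inl hc)
  simp only [map_sub] at hfab
  linarith

theorem exists_mem_dualWedge_pos (hC : IsCone C) (hCc : IsClosed (C ∪ {0})) {y : X}
    (hy : y ∈ C) : ∃ ψ ∈ dualWedge C, 0 < ψ y := by
  by_contra! h
  have hy0 : coneLE C y 0 :=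
    (coneLE_iff_forall_dualWedge hC hCc).2 fun φ hφ => by simpa using h φ hφ
  rcases hy0 with hy0 | hy0
  · exact hC.2.2 y hy (by simpa using hy0)
  · exact hC.zero_notMem (by simp_all)

theorem dominates.apply_eq_zero {x y : X} (hxy : dominates C x y) (hy : y ∈ C)
    {φ : StrongDual ℝ X} (hφ : φ ∈ dualWedge C) (hφx : φ x = 0) : φ y = 0 := by
  obtain ⟨-, β, -, hyx⟩ := hxy
  have := apply_le_apply_of_coneLE hφ hyx
  rw [map_smul, hφx, smul_zero] at this
  exact this.antisymm (hφ y hy)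

def pairingRatios (C : Set X) (x y : X) : Set ℝ :=
  (fun φ : StrongDual ℝ X => φ x / φ y) '' {φ | φ ∈ dualWedge C ∧ 0 < φ y}

section pairingRatios

variable {x y : X}

theorem pairingRatios_nonempty (hC : IsCone C) (hCc : IsClosed (C ∪ {0})) (hy : y ∈ C) :
    (pairingRatios C x y).Nonempty :=
  let ⟨ψ, hψ, hψy⟩ := exists_mem_dualWedge_pos hC hCc hy
  ⟨_, ψ, ⟨hψ, hψy⟩, rfl⟩

theorem div_mem_pairingRatios (hy : y ∈ C) {φ : StrongDual ℝ X} (hφ : φ ∈ dualWedge C)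
    (hφy : φ y ≠ 0) : φ x / φ y ∈ pairingRatios C x y :=
  ⟨φ, ⟨hφ, (hφ y hy).lt_of_ne' hφy⟩, rfl⟩

theorem upperBounds_pairingRatios (hC : IsCone C) (hCc : IsClosed (C ∪ {0})) (hx : x ∈ C)
    (hy : y ∈ C) (hyx : dominates C y x) :
    upperBounds (pairingRatios C x y) = {β | coneLE C x (β • y)} := by
  ext β
  simp only [pairingRatios, mem_upperBounds, forall_mem_image, mem_ofPred_eq,
    coneLE_iff_forall_dualWedge hC hCc, map_smul, smul_eq_mul]
  refine ⟨fun h φ hφ => ?_, fun h φ hφ => (div_le_iff₀ hφ.2).2 (h φ hφ.1)⟩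
  rcases (hφ y hy).eq_or_lt with hφy | hφy
  · rw [← hφy, mul_zero, hyx.apply_eq_zero hx hφ hφy.symm]
  · exact (div_le_iff₀ hφy).1 (h ⟨hφ, hφy⟩)

theorem lowerBounds_pairingRatios (hC : IsCone C) (hCc : IsClosed (C ∪ {0})) (hx : x ∈ C)
    (hy : y ∈ C) : lowerBounds (pairingRatios C x y) = {α | coneLE C (α • y) x} := by
  ext α
  simp only [pairingRatios, mem_lowerBounds, forall_mem_image, mem_ofPred_eq,
    coneLE_iff_forall_dualWedge hC hCc, map_smul, smul_eq_mul]
  refine ⟨fun h φ hφ => ?_, fun h φ hφ => (le_div_iff₀ hφ.2).2 (h φ hφ.1)⟩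
  rcases (hφ y hy).eq_or_lt with hφy | hφy
  · rw [← hφy, mul_zero]
    exact hφ x hx
  · exact (le_div_iff₀ hφy).1 (h ⟨hφ, hφy⟩)

theorem exists_pos_mem_lowerBounds_pairingRatios (hC : IsCone C) (hCc : IsClosed (C ∪ {0}))
    (hx : x ∈ C) (hy : y ∈ C) (hxy : dominates C x y) :
    ∃ a, 0 < a ∧ a ∈ lowerBounds (pairingRatios C x y) := by
  obtain ⟨-, β, -, hyx⟩ := hxy
  have hyx' : ∀ φ ∈ dualWedge C, φ y ≤ β * φ x := fun φ hφ => by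
    simpa using apply_le_apply_of_coneLE hφ hyx
  obtain ⟨ψ, hψ, hψy⟩ := exists_mem_dualWedge_pos hC hCc hy
  have hβ : 0 < β := pos_of_mul_pos_left (hψy.trans_le (hyx' ψ hψ)) (hψ x hx)
  refine ⟨β⁻¹, inv_pos.2 hβ, ?_⟩
  rintro _ ⟨φ, ⟨hφ, hφy⟩, rfl⟩
  rw [le_div_iff₀ hφy, inv_mul_le_iff₀ hβ]
  exact hyx' φ hφ

theorem bddAbove_pairingRatios (hC : IsCone C) (hCc : IsClosed (C ∪ {0})) (hx : x ∈ C)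
    (hy : y ∈ C) (hyx : dominates C y x) : BddAbove (pairingRatios C x y) := by
  have hT := upperBounds_pairingRatios hC hCc hx hy hyx
  obtain ⟨-, β, -, hβ⟩ := hyx
  exact ⟨β, hT ▸ hβ⟩

theorem coneMM_eq_sSup_pairingRatios (hC : IsCone C) (hCc : IsClosed (C ∪ {0})) (hx : x ∈ C)
    (hy : y ∈ C) (hyx : dominates C y x) : coneMM C x y = sSup (pairingRatios C x y) := by
  rw [coneMM, ← upperBounds_pairingRatios hC hCc hx hy hyx]
  exact csInf_upperBounds_eq_csSup (bddAbove_pairingRatios hC hCc hx hy hyx)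
    (pairingRatios_nonempty hC hCc hy)

theorem coneM_eq_sInf_pairingRatios (hC : IsCone C) (hCc : IsClosed (C ∪ {0})) (hx : x ∈ C)
    (hy : y ∈ C) (hxy : dominates C x y) : coneM C x y = sInf (pairingRatios C x y) := by
  obtain ⟨a, -, ha⟩ := exists_pos_mem_lowerBounds_pairingRatios hC hCc hx hy hxy
  rw [coneM, ← lowerBounds_pairingRatios hC hCc hx hy]
  exact csSup_lowerBounds_eq_csInf ⟨a, ha⟩ (pairingRatios_nonempty hC hCc hy)

theorem crossRatios_eq_div_pairingRatios (hx : x ∈ C) (hy : y ∈ C)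
    (hxy : coneComparable C x y) :
    {r : ℝ | ∃ φ ∈ dualWedge C, ∃ ψ ∈ dualWedge C,
        φ y * ψ x ≠ 0 ∧ r = (φ x * ψ y) / (φ y * ψ x)} =
      pairingRatios C x y / pairingRatios C x y := by
  ext r
  constructor
  · rintro ⟨φ, hφ, ψ, hψ, hne, rfl⟩
    obtain ⟨hφy, hψx⟩ := mul_ne_zero_iff.1 hne
    have hψy : ψ y ≠ 0 := fun h => hψx (hxy.2.apply_eq_zero hx hψ h)
    exact ⟨_, div_mem_pairingRatios hy hφ hφy, _, div_mem_pairingRatios hy hψ hψy,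
      div_div_div_eq _ _ _ _⟩
  · rintro ⟨_, ⟨φ, ⟨hφ, hφy⟩, rfl⟩, _, ⟨ψ, ⟨hψ, hψy⟩, rfl⟩, rfl⟩
    have hψx : ψ x ≠ 0 := fun h => hψy.ne' (hxy.1.apply_eq_zero hy hψ h)
    exact ⟨φ, hφ, ψ, hψ, mul_ne_zero hφy.ne' hψx, div_div_div_eq _ _ _ _⟩

end pairingRatios

end

theorem hilbertTheta_dual_pairing_general {X : Type*} [NormedAddCommGroup X]
    [NormedSpace ℝ X]
    (C : Set X) (hC : IsCone C) (hCc : IsClosed (C ∪ {0}))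
    (x y : X) (hx : x ∈ C) (hy : y ∈ C) (hxy : coneComparable C x y) :
    (∀ φ ∈ dualWedge C, (φ x = 0 ↔ φ y = 0)) ∧
    hilbertTheta C x y =
      Real.log (sSup {r : ℝ | ∃ φ ∈ dualWedge C, ∃ ψ ∈ dualWedge C,
        φ y * ψ x ≠ 0 ∧ r = (φ x * ψ y) / (φ y * ψ x)}) ∧
    (∀ φ ∈ dualWedge C, ∀ ψ ∈ dualWedge C,
      φ x ≠ 0 → φ y ≠ 0 → ψ x ≠ 0 → ψ y ≠ 0 →
      |Real.log (φ x / φ y) - Real.log (ψ x / ψ y)| ≤ hilbertTheta C x y) := by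
  set Q := pairingRatios C x y
  have hne : Q.Nonempty := pairingRatios_nonempty hC hCc hy
  have hbdd : BddAbove Q := bddAbove_pairingRatios hC hCc hx hy hxy.2
  obtain ⟨a, ha, has⟩ := exists_pos_mem_lowerBounds_pairingRatios hC hCc hx hy hxy.1
  have hinf : 0 < sInf Q := ha.trans_le (le_csInf hne has)
  have hTheta : hilbertTheta C x y = Real.log (sSup Q / sInf Q) := by
    rw [hilbertTheta, coneMM_eq_sSup_pairingRatios hC hCc hx hy hxy.2,
      coneM_eq_sInf_pairingRatios hC hCc hx hy hxy.1]
  refine ⟨fun φ hφ => ⟨hxy.1.apply_eq_zero hy hφ, hxy.2.apply_eq_zero hx hφ⟩, ?_, ?_⟩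
  · rw [hTheta, crossRatios_eq_div_pairingRatios hx hy hxy, Real.csSup_div_self hne hbdd ha has]
  · intro φ hφ ψ hψ _ hφy _ hψy
    have hmem : ∀ χ ∈ dualWedge C, χ y ≠ 0 → χ x / χ y ∈ Set.Icc (sInf Q) (sSup Q) :=
      fun χ hχ hχy => have hχQ := div_mem_pairingRatios hy hχ hχy
        ⟨csInf_le ⟨a, has⟩ hχQ, le_csSup hbdd hχQ⟩
    rw [hTheta]
    exact Real.abs_log_sub_log_le_log_div (hmem φ hφ hφy) (hmem ψ hψ hψy) hinf

/-- Dual pairing characterization of the Hilbert metric, and the resulting dual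
pairing bound. -/
theorem hilbertTheta_dual_pairing {X : Type*} [NormedAddCommGroup X]
    [NormedSpace ℝ X] [CompleteSpace X]
    (C : Set X) (hC : IsCone C) (hCc : IsClosed (C ∪ {0}))
    (x y : X) (hx : x ∈ C) (hy : y ∈ C) (hxy : coneComparable C x y) :
    (∀ φ ∈ dualWedge C, (φ x = 0 ↔ φ y = 0)) ∧
    hilbertTheta C x y =
      Real.log (sSup {r : ℝ | ∃ φ ∈ dualWedge C, ∃ ψ ∈ dualWedge C,
        φ y * ψ x ≠ 0 ∧ r = (φ x * ψ y) / (φ y * ψ x)}) ∧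
    (∀ φ ∈ dualWedge C, ∀ ψ ∈ dualWedge C,
      φ x ≠ 0 → φ y ≠ 0 → ψ x ≠ 0 → ψ y ≠ 0 →
      |Real.log (φ x / φ y) - Real.log (ψ x / ψ y)| ≤ hilbertTheta C x y) :=
  hilbertTheta_dual_pairing_general C hC hCc x y hx hy hxy
end
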